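/- The following exact matrix identities hold: σ₁σ₂σ₁ = e^{iπ/8}·H, σ₂² = e^{iπ/4}·X, σ₁² = e^{iπ/4}·Z, σ₁²·σ₂^{−2} = i·Y, and σ₁^{−1} = −e^{−iπ/8}·S, where H = (1/√2)·[[1,1],[1,−1]], X = [[0,1],[1,0]], Y = [[0,−i],[i,0]], Z = diag(1,−1), and S = diag(1,i). Hence braiding of Ising anyons implements the single-qubit Clifford generators exactly, up to explicit global phases. -/

import Mathlib

open Complex Matrix

/-- The Ising braid matrix `σ₁ = e^{iπ/8}·diag(−1, i)`. -/
noncomputable def sigma1 : Matrix (Fin 2) (Fin 2) ℂ :=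
  Complex.exp (Complex.I * Real.pi / 8) • !![-1, 0; 0, Complex.I]

/-- The Ising braid matrix `σ₂ = (e^{−iπ/8}/√2)·[[1, i],[i, 1]]`. -/
noncomputable def sigma2 : Matrix (Fin 2) (Fin 2) ℂ :=
  (Complex.exp (-(Complex.I * Real.pi / 8)) / (Real.sqrt 2 : ℂ)) • !![1, Complex.I; Complex.I, 1]

/-- The Hadamard gate. -/
noncomputable def Hgate : Matrix (Fin 2) (Fin 2) ℂ :=
  ((1 / Real.sqrt 2 : ℝ) : ℂ) • !![1, 1; 1, -1]

/-- The Pauli X gate. -/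
def Xgate : Matrix (Fin 2) (Fin 2) ℂ := !![0, 1; 1, 0]

/-- The Pauli Y gate. -/
def Ygate : Matrix (Fin 2) (Fin 2) ℂ := !![0, -Complex.I; Complex.I, 0]

/-- The Pauli Z gate. -/
def Zgate : Matrix (Fin 2) (Fin 2) ℂ := !![1, 0; 0, -1]

/-- The phase gate `S = diag(1, i)`. -/
def Sgate : Matrix (Fin 2) (Fin 2) ℂ := !![1, 0; 0, Complex.I]

/-! Up to scalars, `σ₁` and `σ₂` are `!![-1, 0; 0, i]` and `!![1, i; i, 1]` (the "mix" matrix);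
the gate identities are identities between these over any ring with `i * i = -1`, combined
with the phase arithmetic `e^{-iπ/4} · i = e^{iπ/4}` and `(√2)² = 2`. -/

section BraidMatrices

variable {R : Type*} [CommRing R] {i : R}

theorem diag_mul_mix_mul_diag (hi : i * i = -1) :
    !![-1, 0; 0, i] * !![1, i; i, 1] * !![-1, 0; 0, i] = !![1, 1; 1, -1] := by
  simp [hi]

theorem mix_sq (hi : i * i = -1) : !![1, i; i, 1] ^ 2 = (2 * i) • !![0, 1; 1, 0] := by
  ext a b; fin_cases a <;> fin_cases b <;> simp [sq, hi, two_mul]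

theorem diag_sq (hi : i * i = -1) : !![-1, 0; 0, i] ^ 2 = !![1, 0; 0, -1] := by
  simp [sq, hi]

theorem diag_mul_phase (hi : i * i = -1) : !![-1, 0; 0, i] * !![1, 0; 0, i] = -1 := by
  ext a b; fin_cases a <;> fin_cases b <;> simp [hi]

end BraidMatrices

theorem Xgate_mul_Xgate : Xgate * Xgate = 1 := by
  ext a b; fin_cases a <;> fin_cases b <;> simp [Xgate]

theorem Zgate_mul_Xgate : Zgate * Xgate = Complex.I • Ygate := by
  ext a b; fin_cases a <;> fin_cases b <;> simp [Xgate, Ygate, Zgate]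

theorem ofReal_sqrt_two_sq : ((Real.sqrt 2 : ℝ) : ℂ) ^ 2 = 2 := by
  rw [← Complex.ofReal_pow, Real.sq_sqrt zero_le_two, Complex.ofReal_ofNat]

theorem exp_I_pi_div_eight_sq :
    Complex.exp (Complex.I * Real.pi / 8) ^ 2 = Complex.exp (Complex.I * Real.pi / 4) := by
  rw [← Complex.exp_nat_mul]; ring_nf

theorem exp_neg_I_pi_div_eight_sq_mul_I :
    Complex.exp (-(Complex.I * Real.pi / 8)) ^ 2 * Complex.I =
      Complex.exp (Complex.I * Real.pi / 4) := by
  have h : Complex.exp (-(Complex.I * Real.pi / 8)) ^ 2 * Complex.exp (Real.pi / 2 * Complex.I) =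
      Complex.exp (Complex.I * Real.pi / 4) := by
    rw [← Complex.exp_nat_mul, ← Complex.exp_add]; ring_nf
  rwa [Complex.exp_pi_div_two_mul_I] at h

theorem sigma1_mul_sigma2_mul_sigma1 :
    sigma1 * sigma2 * sigma1 = Complex.exp (Complex.I * Real.pi / 8) • Hgate := by
  simp only [sigma1, sigma2, Hgate, Matrix.smul_mul, Matrix.mul_smul, smul_smul,
    diag_mul_mix_mul_diag Complex.I_mul_I]
  congr 1
  have hsqrt : (Real.sqrt 2 : ℂ) ≠ 0 := by simp
  rw [Complex.exp_neg]
  push_cast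
  field_simp

theorem sigma2_sq : sigma2 ^ 2 = Complex.exp (Complex.I * Real.pi / 4) • Xgate := by
  rw [sigma2, smul_pow, mix_sq Complex.I_mul_I, smul_smul, Xgate, div_pow, ofReal_sqrt_two_sq,
    ← exp_neg_I_pi_div_eight_sq_mul_I]
  congr 1
  ring

theorem sigma1_sq : sigma1 ^ 2 = Complex.exp (Complex.I * Real.pi / 4) • Zgate := by
  rw [sigma1, smul_pow, diag_sq Complex.I_mul_I, exp_I_pi_div_eight_sq, Zgate]

theorem sigma1_sq_mul_inv_sigma2_sq : sigma1 ^ 2 * (sigma2 ^ 2)⁻¹ = Complex.I • Ygate := by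
  have hinv : (sigma2 ^ 2)⁻¹ = (Complex.exp (Complex.I * Real.pi / 4))⁻¹ • Xgate := by
    refine Matrix.inv_eq_left_inv ?_
    rw [sigma2_sq, smul_mul_smul, inv_mul_cancel₀ (Complex.exp_ne_zero _), Xgate_mul_Xgate,
      one_smul]
  rw [sigma1_sq, hinv, smul_mul_smul, mul_inv_cancel₀ (Complex.exp_ne_zero _), one_smul,
    Zgate_mul_Xgate]

theorem sigma1_inv : sigma1⁻¹ = (-Complex.exp (-(Complex.I * Real.pi / 8))) • Sgate := by
  refine Matrix.inv_eq_right_inv ?_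
  rw [sigma1, Sgate, smul_mul_smul, diag_mul_phase Complex.I_mul_I, Complex.exp_neg,
    mul_neg, mul_inv_cancel₀ (Complex.exp_ne_zero _), smul_neg, neg_smul, neg_neg, one_smul]

/-- Braiding of semisimple Ising anyons implements the single-qubit Clifford generators
exactly, up to explicit global phases. -/
theorem ising_clifford_gates :
    sigma1 * sigma2 * sigma1 = Complex.exp (Complex.I * Real.pi / 8) • Hgate ∧
    sigma2 ^ 2 = Complex.exp (Complex.I * Real.pi / 4) • Xgate ∧
    sigma1 ^ 2 = Complex.exp (Complex.I * Real.pi / 4) • Zgate ∧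
    sigma1 ^ 2 * (sigma2 ^ 2)⁻¹ = Complex.I • Ygate ∧
    sigma1⁻¹ = (-Complex.exp (-(Complex.I * Real.pi / 8))) • Sgate :=
  ⟨sigma1_mul_sigma2_mul_sigma1, sigma2_sq, sigma1_sq, sigma1_sq_mul_inv_sigma2_sq, sigma1_inv⟩
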